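/- Fix σ > 1/2, a positive integer l, a constant c̄ > 0, and let g : ℝ → ℝ satisfy g(T) > T for all large T. Assume: (i) ∫_T^{g(T)} |ζ(1/2+it)|² dt / ∫_T^{g(T)} |ζ(σ+it)|² dt = (1/ζ(2σ))·ln T + O(1) as T → ∞; (ii) ∫_T^{g(T)} |ζ(1/2+it)|² dt / ∫_T^{g(T)} |S₁(t)|^{2l} dt = (1/c̄)·ln T + O(1) as T → ∞; (iii) (t_ν) is a Gram sequence satisfying both the Titchmarsh-sum asymptotic and the second Moser asymptotic. Fix x > 0 and set K₁ = 4π⁵·x/(3·ζ(2σ)⁵), K₂ = 4π⁵·x/(3·c̄⁵), K₃ = 4π³·x/ζ(2σ)⁵. Define A(τ) = (∫_{K₁τ}^{g(K₁τ)} |ζ(σ+it)|² dt)⁵·(∫_{K₁τ}^{g(K₁τ)} |ζ(1/2+it)|² dt)^{−5}·Σ_{ν : K₁τ ≤ t_ν ≤ 2K₁τ} |ζ(1/2+i t_ν)|²|ζ(1/2+i t_{ν+1})|², B(τ) = (∫_{K₂τ}^{g(K₂τ)} |S₁(t)|^{2l} dt)⁵·(∫_{K₂τ}^{g(K₂τ)}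 |ζ(1/2+it)|² dt)^{−5}·Σ_{ν : K₂τ ≤ t_ν ≤ 2K₂τ} |ζ(1/2+i t_ν)|²|ζ(1/2+i t_{ν+1})|², and C(τ) = (∫_{K₃τ}^{g(K₃τ)} |ζ(σ+it)|² dt)⁵·(∫_{K₃τ}^{g(K₃τ)} |ζ(1/2+it)|² dt)^{−5}·Σ_{ν : K₃τ ≤ t_ν ≤ 2K₃τ} |ζ(1/2+i t_ν)|⁴. Then A(τ) ~ B(τ) ~ C(τ) ~ x·τ as τ → ∞. -/

import Mathlib

open Filter Topology MeasureTheory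

/-- |ζ(σ+it)|² -/
noncomputable def zsq (σ : ℝ) (t : ℝ) : ℝ :=
  ‖riemannZeta (↑σ + ↑t * Complex.I)‖ ^ 2

/-- S₁(t) = (1/π)·∫₀^t arg ζ(1/2 + iu) du -/
noncomputable def S1 (t : ℝ) : ℝ :=
  (1 / Real.pi) * ∫ u in (0:ℝ)..t, Complex.arg (riemannZeta (1/2 + ↑u * Complex.I))

/-- Riemann–Siegel theta function θ(t) = Im log Γ(1/4 + it/2) − (t/2)·ln π. -/
noncomputable def RStheta (t : ℝ) : ℝ :=
  (Complex.log (Complex.Gamma (1/4 + (↑t/2) * Complex.I))).im - (t/2) * Real.log Real.pi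

/-- A Gram sequence: strictly increasing positive reals tending to ∞ with θ(t_ν) = π·ν. -/
def IsGramSeq (tν : ℕ → ℝ) : Prop :=
  StrictMono tν ∧ (∀ ν : ℕ, 1 ≤ ν → 0 < tν ν) ∧ Filter.Tendsto tν Filter.atTop Filter.atTop ∧
    ∀ ν : ℕ, 1 ≤ ν → RStheta (tν ν) = Real.pi * ν

/-- Titchmarsh sum Σ_{T ≤ t_ν ≤ 2T} |ζ(1/2+it_ν)|²·|ζ(1/2+it_{ν+1})|². -/
noncomputable def TitchSum (tν : ℕ → ℝ) (T : ℝ) : ℝ :=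
  ∑' ν : ℕ, if T ≤ tν ν ∧ tν ν ≤ 2 * T then zsq (1/2) (tν ν) * zsq (1/2) (tν (ν+1)) else 0

/-- The Titchmarsh-sum asymptotic (Moser 1991):
Σ_{T ≤ t_ν ≤ 2T} |ζ(1/2+it_ν)|²|ζ(1/2+it_{ν+1})|² = (3/(4π⁵))·T·ln⁵T·(1+O(1/ln T)). -/
def TitchAsymp (tν : ℕ → ℝ) : Prop :=
  ∃ C : ℝ, ∀ᶠ T in Filter.atTop,
    |TitchSum tν T / (3 / (4 * Real.pi ^ 5) * T * Real.log T ^ 5) - 1| ≤ C / Real.log T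

/-- The sum Σ_{T ≤ t_ν ≤ 2T} |ζ(1/2+it_ν)|⁴. -/
noncomputable def MoserSum (tν : ℕ → ℝ) (T : ℝ) : ℝ :=
  ∑' ν : ℕ, if T ≤ tν ν ∧ tν ν ≤ 2 * T
    then ‖riemannZeta (1/2 + ↑(tν ν) * Complex.I)‖ ^ 4 else 0

/-- The second Moser asymptotic (1991):
Σ_{T ≤ t_ν ≤ 2T} |ζ(1/2+it_ν)|⁴ = (1/(4π³))·T·ln⁵T·(1+O(1/ln T)). -/
def MoserAsymp (tν : ℕ → ℝ) : Prop :=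
  ∃ C : ℝ, ∀ᶠ T in Filter.atTop,
    |MoserSum tν T / (1 / (4 * Real.pi ^ 3) * T * Real.log T ^ 5) - 1| ≤ C / Real.log T

/-- A(τ): first member of the chain, with K₁ = 4π⁵x/(3ζ(2σ)⁵). -/
noncomputable def chainA (σ : ℝ) (g : ℝ → ℝ) (tν : ℕ → ℝ) (x τ : ℝ) : ℝ :=
  ((∫ t in (4 * Real.pi ^ 5 * x / (3 * (riemannZeta (2 * (σ:ℂ))).re ^ 5) * τ)..(g (4 * Real.pi ^ 5 * x / (3 * (riemannZeta (2 * (σ:ℂ))).re ^ 5) * τ)), zsq σ t) ^ 5) *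
  (((∫ t in (4 * Real.pi ^ 5 * x / (3 * (riemannZeta (2 * (σ:ℂ))).re ^ 5) * τ)..(g (4 * Real.pi ^ 5 * x / (3 * (riemannZeta (2 * (σ:ℂ))).re ^ 5) * τ)), zsq (1/2) t) ^ 5)⁻¹) *
  TitchSum tν (4 * Real.pi ^ 5 * x / (3 * (riemannZeta (2 * (σ:ℂ))).re ^ 5) * τ)

/-- B(τ): second member of the chain, with K₂ = 4π⁵x/(3c̄⁵). -/
noncomputable def chainB (l : ℕ) (cbar : ℝ) (g : ℝ → ℝ) (tν : ℕ → ℝ) (x τ : ℝ) : ℝ :=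
  ((∫ t in (4 * Real.pi ^ 5 * x / (3 * cbar ^ 5) * τ)..(g (4 * Real.pi ^ 5 * x / (3 * cbar ^ 5) * τ)), |S1 t| ^ (2 * l)) ^ 5) *
  (((∫ t in (4 * Real.pi ^ 5 * x / (3 * cbar ^ 5) * τ)..(g (4 * Real.pi ^ 5 * x / (3 * cbar ^ 5) * τ)), zsq (1/2) t) ^ 5)⁻¹) *
  TitchSum tν (4 * Real.pi ^ 5 * x / (3 * cbar ^ 5) * τ)

/-- C(τ): third member of the chain, with K₃ = 4π³x/ζ(2σ)⁵. -/
noncomputable def chainC (σ : ℝ) (g : ℝ → ℝ) (tν : ℕ → ℝ) (x τ : ℝ) : ℝ :=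
  ((∫ t in (4 * Real.pi ^ 3 * x / (riemannZeta (2 * (σ:ℂ))).re ^ 5 * τ)..(g (4 * Real.pi ^ 3 * x / (riemannZeta (2 * (σ:ℂ))).re ^ 5 * τ)), zsq σ t) ^ 5) *
  (((∫ t in (4 * Real.pi ^ 3 * x / (riemannZeta (2 * (σ:ℂ))).re ^ 5 * τ)..(g (4 * Real.pi ^ 3 * x / (riemannZeta (2 * (σ:ℂ))).re ^ 5 * τ)), zsq (1/2) t) ^ 5)⁻¹) *
  MoserSum tν (4 * Real.pi ^ 3 * x / (riemannZeta (2 * (σ:ℂ))).re ^ 5 * τ)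

/-!
Hypotheses (i) and (ii) say that the ratio of the two integrals over `[T, g T]` is
`~ ln T / z` with `z = ζ(2σ)` resp. `z = c̄`, and the two Moser asymptotics say that the sums
are `~ c · T · ln⁵ T`. In the fifth power of the inverse ratio times the sum the factor `ln⁵ T`
cancels, leaving `~ z⁵ · c · T`; each `Kᵢ` is chosen so that `z⁵ · c · Kᵢ = x`, so all three
members are `~ x τ`.
-/

open Asymptotics

section Equivalence

variable {α : Type*} {l : Filter α}

lemma isEquivalent_of_abs_sub_le_const {u f : α → ℝ} (hf : Tendsto f l atTop)
    (h : ∃ C, ∀ᶠ x in l, |u x - f x| ≤ C) : u ~[l] f := by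
  obtain ⟨C, hC⟩ := h
  have hbounded : (u - f) =O[l] fun _ => (1 : ℝ) :=
    IsBigO.of_bound C (hC.mono fun x hx => by simpa using hx)
  exact hbounded.trans_isLittleO
    ((isLittleO_one_left_iff ℝ).mpr (tendsto_abs_atTop_atTop.comp hf))

lemma isEquivalent_of_abs_div_sub_one_le_div {u v f : α → ℝ} (hf : Tendsto f l atTop)
    (h : ∃ C, ∀ᶠ x in l, |u x / v x - 1| ≤ C / f x) : u ~[l] v := by
  obtain ⟨C, hC⟩ := h
  refine isEquivalent_of_tendsto_one ?_
  have hsub : Tendsto (fun x => u x / v x - 1) l (𝓝 0) :=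
    squeeze_zero_norm' hC (tendsto_const_nhds.div_atTop hf)
  have hlim := hsub.add_const 1
  simp only [sub_add_cancel, zero_add] at hlim
  exact hlim

lemma isEquivalent_pow_mul_inv_pow_mul {a b S L M : α → ℝ} {z : ℝ} (hz : z ≠ 0)
    (hL : ∀ᶠ x in l, L x ≠ 0) (hab : (fun x => a x / b x) ~[l] fun x => 1 / z * L x)
    (hS : S ~[l] fun x => M x * L x ^ 5) :
    (fun x => b x ^ 5 * (a x ^ 5)⁻¹ * S x) ~[l] fun x => z ^ 5 * M x := by
  refine ((hab.inv.pow 5).mul hS).congr_left (Eventually.of_forall fun x => ?_)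
    |>.congr_right (hL.mono fun x hx => ?_)
  · simp only [Pi.mul_apply, Pi.pow_apply, Pi.inv_apply, inv_div, div_pow]
    ring
  · simp only [Pi.mul_apply, Pi.pow_apply, Pi.inv_apply]
    field_simp

lemma tendsto_div_nhds_one_of_isEquivalent {u v w : α → ℝ}
    (hu : u ~[l] w) (hv : v ~[l] w) (hw : ∀ᶠ x in l, w x ≠ 0) :
    Tendsto (fun x => u x / v x) l (𝓝 1) :=
  (hu.div hv).symm.tendsto_nhds
    (tendsto_const_nhds.congr' (hw.mono fun _ hx => (div_self hx).symm))

end Equivalence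

lemma isEquivalent_pow_mul_inv_pow_mul_comp_const_mul {a b S : ℝ → ℝ} {z c K : ℝ}
    (hz : z ≠ 0) (hK : 0 < K)
    (hab : (fun T => a T / b T) ~[atTop] fun T => 1 / z * Real.log T)
    (hS : S ~[atTop] fun T => c * T * Real.log T ^ 5) :
    (fun τ => b (K * τ) ^ 5 * (a (K * τ) ^ 5)⁻¹ * S (K * τ)) ~[atTop]
      fun τ => z ^ 5 * c * K * τ := by
  have hequiv := isEquivalent_pow_mul_inv_pow_mul (M := fun T => c * T) hz
    (Real.tendsto_log_atTop.eventually_ne_atTop 0) hab hS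
  refine (hequiv.comp_tendsto (tendsto_id.const_mul_atTop hK)).congr_right
    (Eventually.of_forall fun τ => ?_)
  simp only [Function.comp_apply, id]
  ring

theorem chain_of_equivalences_general (σ : ℝ) (hσ : 1/2 < σ) (l : ℕ)
    (cbar : ℝ) (hcbar : 0 < cbar) (g : ℝ → ℝ)
    (hquotζ : ∃ C : ℝ, ∀ᶠ T in atTop,
      |(∫ t in T..(g T), zsq (1/2) t) / (∫ t in T..(g T), zsq σ t) -
        (1 / (riemannZeta (2 * (σ:ℂ))).re) * Real.log T| ≤ C)
    (hquotS1 : ∃ C : ℝ, ∀ᶠ T in atTop,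
      |(∫ t in T..(g T), zsq (1/2) t) / (∫ t in T..(g T), |S1 t| ^ (2 * l)) -
        (1 / cbar) * Real.log T| ≤ C)
    (tν : ℕ → ℝ) (htitch : TitchAsymp tν) (hmoser : MoserAsymp tν)
    (x : ℝ) (hx : 0 < x) :
    Tendsto (fun τ : ℝ => chainA σ g tν x τ / chainB l cbar g tν x τ) atTop (nhds 1) ∧
    Tendsto (fun τ : ℝ => chainB l cbar g tν x τ / chainC σ g tν x τ) atTop (nhds 1) ∧
    Tendsto (fun τ : ℝ => chainC σ g tν x τ / (x * τ)) atTop (nhds 1) := by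
  have hz : 0 < (riemannZeta (2 * (σ:ℂ))).re := by
    simpa using riemannZeta_re_pos_of_one_lt (x := 2 * σ) (by linarith)
  have hlog {c : ℝ} (hc : 0 < c) : Tendsto (fun T => 1 / c * Real.log T) atTop atTop :=
    Real.tendsto_log_atTop.const_mul_atTop (by positivity)
  have hζ := isEquivalent_of_abs_sub_le_const (hlog hz) hquotζ
  have hS1 := isEquivalent_of_abs_sub_le_const (hlog hcbar) hquotS1
  have hT := isEquivalent_of_abs_div_sub_one_le_div Real.tendsto_log_atTop htitch
  have hM := isEquivalent_of_abs_div_sub_one_le_div Real.tendsto_log_atTop hmoser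
  have hA : chainA σ g tν x ~[atTop] fun τ => x * τ :=
    (isEquivalent_pow_mul_inv_pow_mul_comp_const_mul hz.ne' (by positivity) hζ hT)
      |>.congr_right (Eventually.of_forall fun τ => by field_simp)
  have hB : chainB l cbar g tν x ~[atTop] fun τ => x * τ :=
    (isEquivalent_pow_mul_inv_pow_mul_comp_const_mul hcbar.ne' (by positivity) hS1 hT)
      |>.congr_right (Eventually.of_forall fun τ => by field_simp)
  have hC : chainC σ g tν x ~[atTop] fun τ => x * τ :=
    (isEquivalent_pow_mul_inv_pow_mul_comp_const_mul hz.ne' (by positivity) hζ hM)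
      |>.congr_right (Eventually.of_forall fun τ => by field_simp)
  have hxτ : ∀ᶠ τ : ℝ in atTop, x * τ ≠ 0 :=
    (eventually_gt_atTop 0).mono fun τ hτ => (mul_pos hx hτ).ne'
  exact ⟨tendsto_div_nhds_one_of_isEquivalent hA hB hxτ,
    tendsto_div_nhds_one_of_isEquivalent hB hC hxτ,
    tendsto_div_nhds_one_of_isEquivalent hC IsEquivalent.refl hxτ⟩

theorem chain_of_equivalences (σ : ℝ) (hσ : 1/2 < σ) (l : ℕ) (hl : 0 < l)
    (cbar : ℝ) (hcbar : 0 < cbar) (g : ℝ → ℝ) (hg : ∀ᶠ T in atTop, T < g T)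
    (hquotζ : ∃ C : ℝ, ∀ᶠ T in atTop,
      |(∫ t in T..(g T), zsq (1/2) t) / (∫ t in T..(g T), zsq σ t) -
        (1 / (riemannZeta (2 * (σ:ℂ))).re) * Real.log T| ≤ C)
    (hquotS1 : ∃ C : ℝ, ∀ᶠ T in atTop,
      |(∫ t in T..(g T), zsq (1/2) t) / (∫ t in T..(g T), |S1 t| ^ (2 * l)) -
        (1 / cbar) * Real.log T| ≤ C)
    (tν : ℕ → ℝ) (hgram : IsGramSeq tν) (htitch : TitchAsymp tν) (hmoser : MoserAsymp tν)
    (x : ℝ) (hx : 0 < x) :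
    Tendsto (fun τ : ℝ => chainA σ g tν x τ / chainB l cbar g tν x τ) atTop (nhds 1) ∧
    Tendsto (fun τ : ℝ => chainB l cbar g tν x τ / chainC σ g tν x τ) atTop (nhds 1) ∧
    Tendsto (fun τ : ℝ => chainC σ g tν x τ / (x * τ)) atTop (nhds 1) :=
  chain_of_equivalences_general σ hσ l cbar hcbar g hquotζ hquotS1 tν htitch hmoser x hx
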